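/- Let R be a coherent ring such that every exact complex of injective left R-modules has all of its cycles Ding injective. Then every exact complex of flat right R-modules is F-totally acyclic. -/

import Mathlib

/-!
Definitions for formalizing "Acyclic complexes and Gorenstein rings"
(Estrada, Iacob, Zolt).
-/

open CategoryTheory Opposite

universe u
noncomputable section
namespace AcyclicGorenstein

/-! ### Complexes of modules -/

section Complexes
variable (T : Type u) [Ring T]

/-- Unbounded chain complexes of left `T`-modules. -/
abbrev Cx := ChainComplex (ModuleCat.{u} T) ℤ

/-- A complex is exact (acyclic) if it has zero homology in every degree. -/
def IsExactCx (C : Cx T) : Prop := ∀ n : ℤ, Function.Exact (C.d (n+1) n) (C.d n (n-1))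

/-- The `n`-th cycle module `Z_n C = ker (d : C_n → C_{n-1})` of a complex. -/
def cycleMod (C : Cx T) (n : ℤ) : ModuleCat.{u} T :=
  ModuleCat.of T (LinearMap.ker (C.d n (n-1)).hom)

/-- `M` is (isomorphic to) a cycle of the complex `C`. -/
def IsCycleOf (C : Cx T) (M : ModuleCat.{u} T) : Prop :=
  ∃ n : ℤ, Nonempty (M ≃ₗ[T] LinearMap.ker (C.d n (n-1)).hom)

/-- All cycles of `C` belong to the class `P`. -/
def cyclesIn (P : ModuleCat.{u} T → Prop) (C : Cx T) : Prop := ∀ n : ℤ, P (cycleMod T C n)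

/-- All components of `C` belong to the class `P`, i.e. `C ∈ dw(P)`. -/
def dwIn (P : ModuleCat.{u} T → Prop) (C : Cx T) : Prop := ∀ n : ℤ, P (C.X n)

/-- A chain map is null-homotopic. -/
def NullHomotopic {V W : Cx T} (f : V ⟶ W) : Prop := Nonempty (Homotopy f 0)

/-- Exactness of the complex `Hom(E, C)`: every map `E → Z_n C` lifts along `d`. -/
def homIntoExact (E : ModuleCat.{u} T) (C : Cx T) : Prop :=
  ∀ (n : ℤ) (f : E →ₗ[T] C.X n), (C.d n (n-1)).hom ∘ₗ f = 0 →
    ∃ g : E →ₗ[T] C.X (n+1), (C.d (n+1) n).hom ∘ₗ g = f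

/-- Exactness of the complex `Hom(C, Q)`. -/
def homOutExact (C : Cx T) (Q : ModuleCat.{u} T) : Prop :=
  ∀ (n : ℤ) (f : C.X n →ₗ[T] Q), f ∘ₗ (C.d (n+1) n).hom = 0 →
    ∃ g : C.X (n-1) →ₗ[T] Q, g ∘ₗ (C.d n (n-1)).hom = f

end Complexes

/-! ### Ext, orthogonal classes, cotorsion pairs -/

section Ext
variable (T : Type u) [Ring T]

/-- Vanishing of `Ext^n_T(A, B)` (Ext in the abelian category of `T`-modules). -/
def extVanish (n : ℕ) (A B : ModuleCat.{u} T) : Prop :=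
  Subsingleton (((Ext ℤ (ModuleCat.{u} T) n).obj (op A)).obj B)

/-- The right `Ext^1`-orthogonal class `A^⊥`. -/
def rightOrth (A : ModuleCat.{u} T → Prop) : ModuleCat.{u} T → Prop :=
  fun M => ∀ X, A X → extVanish T 1 X M

/-- The left `Ext^1`-orthogonal class `^⊥B`. -/
def leftOrth (B : ModuleCat.{u} T → Prop) : ModuleCat.{u} T → Prop :=
  fun M => ∀ Y, B Y → extVanish T 1 M Y

/-- `(A, B)` is a cotorsion pair: `B = A^⊥` and `A = ^⊥B`. -/
def IsCotorsionPair (A B : ModuleCat.{u} T → Prop) : Prop :=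
  (∀ M, B M ↔ rightOrth T A M) ∧ (∀ M, A M ↔ leftOrth T B M)

/-- A hereditary pair: `Ext^i(A, B) = 0` for all `A ∈ A`, `B ∈ B`, `i ≥ 1`. -/
def HereditaryPair (A B : ModuleCat.{u} T → Prop) : Prop :=
  ∀ i : ℕ, 1 ≤ i → ∀ X Y, A X → B Y → extVanish T i X Y

/-- A short exact sequence `0 → M₁ → M₂ → M₃ → 0` presented by linear maps. -/
def IsSES {M₁ M₂ M₃ : ModuleCat.{u} T} (i : M₁ →ₗ[T] M₂) (p : M₂ →ₗ[T] M₃) : Prop :=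
  Function.Injective i ∧ Function.Surjective p ∧ Function.Exact i p

/-- Completeness of a cotorsion pair: every module has special approximations on both sides. -/
def CompletePair (A B : ModuleCat.{u} T → Prop) : Prop :=
  ∀ M : ModuleCat.{u} T,
    (∃ (B' A' : ModuleCat.{u} T) (i : M →ₗ[T] B') (p : B' →ₗ[T] A'),
        B B' ∧ A A' ∧ IsSES T i p) ∧
    (∃ (B' A' : ModuleCat.{u} T) (i : B' →ₗ[T] A') (p : A' →ₗ[T] M),
        B B' ∧ A A' ∧ IsSES T i p)

/-- dg-condition for a complex `W` with components in `P`, tested against chain maps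
into `W` from exact complexes with cycles in `Ort`. -/
def dgInto (P Ort : ModuleCat.{u} T → Prop) (W : Cx T) : Prop :=
  dwIn T P W ∧ ∀ V : Cx T, IsExactCx T V → cyclesIn T Ort V →
    ∀ f : V ⟶ W, NullHomotopic T f

/-- dg-condition for a complex `Y` with components in `P`, tested against chain maps
from `Y` to exact complexes with cycles in `Ort`. -/
def dgOut (P Ort : ModuleCat.{u} T → Prop) (Y : Cx T) : Prop :=
  dwIn T P Y ∧ ∀ U : Cx T, IsExactCx T U → cyclesIn T Ort U →
    ∀ f : Y ⟶ U, NullHomotopic T f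

end Ext

/-! ### Classes of modules defined by complexes of injectives/projectives -/

section Classes
variable (T : Type u) [Ring T]

/-- An FP-injective (absolutely pure) module: `Ext^1(F, A) = 0` for every finitely
presented `F`. -/
def FPInj (A : ModuleCat.{u} T) : Prop :=
  ∀ F : ModuleCat.{u} T, Module.FinitePresentation T F → extVanish T 1 F A

/-- A module of type `FP∞`: it has a projective resolution by finitely generated
(projective) modules. -/
def TypeFPInfty (F : ModuleCat.{u} T) : Prop :=
  ∃ (P : ℕ → ModuleCat.{u} T) (d : ∀ i, P (i+1) →ₗ[T] P i) (ε : P 0 →ₗ[T] F),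
    (∀ i, Module.Finite T (P i)) ∧ (∀ i, Projective (P i)) ∧
    Function.Surjective ε ∧ Function.Exact (d 0) ε ∧
    ∀ i, Function.Exact (d (i+1)) (d i)

/-- An absolutely clean module: `Ext^1(F, A) = 0` for every module `F` of type `FP∞`. -/
def AbsClean (A : ModuleCat.{u} T) : Prop :=
  ∀ F : ModuleCat.{u} T, TypeFPInfty T F → extVanish T 1 F A

/-- A totally acyclic complex of injectives: an exact complex of injective modules that
stays exact under `Hom(E, -)` for every injective `E`. -/
def TotAcyclicInjCx (C : Cx T) : Prop :=
  dwIn T (fun M => Injective M) C ∧ IsExactCx T C ∧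
    ∀ E : ModuleCat.{u} T, Injective E → homIntoExact T E C

/-- A Gorenstein injective module: a cycle of a totally acyclic complex of injectives. -/
def GorInj (M : ModuleCat.{u} T) : Prop :=
  ∃ C : Cx T, TotAcyclicInjCx T C ∧ IsCycleOf T C M

/-- An exact complex of injectives remaining exact under `Hom(A, -)` for all
FP-injective `A`. -/
def DingInjCx (C : Cx T) : Prop :=
  dwIn T (fun M => Injective M) C ∧ IsExactCx T C ∧
    ∀ A : ModuleCat.{u} T, FPInj T A → homIntoExact T A C

/-- A Ding injective module. -/
def DingInj (M : ModuleCat.{u} T) : Prop :=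
  ∃ C : Cx T, DingInjCx T C ∧ IsCycleOf T C M

/-- An exact complex of injectives remaining exact under `Hom(A, -)` for all
absolutely clean `A`. -/
def GorACInjCx (C : Cx T) : Prop :=
  dwIn T (fun M => Injective M) C ∧ IsExactCx T C ∧
    ∀ A : ModuleCat.{u} T, AbsClean T A → homIntoExact T A C

/-- A Gorenstein AC-injective module. -/
def GorACInj (M : ModuleCat.{u} T) : Prop :=
  ∃ C : Cx T, GorACInjCx T C ∧ IsCycleOf T C M

/-- A totally acyclic complex of projectives: an exact complex of projective modules that
stays exact under `Hom(-, Q)` for every projective `Q`. -/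
def TotAcyclicProjCx (C : Cx T) : Prop :=
  dwIn T (fun M => Projective M) C ∧ IsExactCx T C ∧
    ∀ Q : ModuleCat.{u} T, Projective Q → homOutExact T C Q

/-- A (possibly infinite) exact left resolution of `M` by modules in the class `P`:
`⋯ → D_1 → D_0 → M → 0`. -/
def ExactLeftRes (P : ModuleCat.{u} T → Prop) (M : ModuleCat.{u} T) : Prop :=
  ∃ (D : ℕ → ModuleCat.{u} T) (d : ∀ i, D (i+1) →ₗ[T] D i) (ε : D 0 →ₗ[T] M),
    (∀ i, P (D i)) ∧ Function.Surjective ε ∧ Function.Exact (d 0) ε ∧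
    ∀ i, Function.Exact (d (i+1)) (d i)

/-- Left resolution dimension at most `n` by modules in the class `P`: there is an exact
sequence `0 → D_n → ⋯ → D_0 → M → 0` with all `D_i ∈ P`. -/
def ResDimLe (P : ModuleCat.{u} T → Prop) (M : ModuleCat.{u} T) (n : ℕ) : Prop :=
  ∃ (D : ℕ → ModuleCat.{u} T) (d : ∀ i, D (i+1) →ₗ[T] D i) (ε : D 0 →ₗ[T] M),
    (∀ i, P (D i)) ∧ (∀ i, n < i → Subsingleton (D i)) ∧
    Function.Surjective ε ∧ Function.Exact (d 0) ε ∧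
    ∀ i, Function.Exact (d (i+1)) (d i)

/-- Right resolution (coresolution) dimension at most `n` by modules in the class `P`:
there is an exact sequence `0 → M → D^0 → ⋯ → D^n → 0` with all `D^i ∈ P`. -/
def CoresDimLe (P : ModuleCat.{u} T → Prop) (M : ModuleCat.{u} T) (n : ℕ) : Prop :=
  ∃ (D : ℕ → ModuleCat.{u} T) (ε : M →ₗ[T] D 0) (d : ∀ i, D i →ₗ[T] D (i+1)),
    (∀ i, P (D i)) ∧ (∀ i, n < i → Subsingleton (D i)) ∧
    Function.Injective ε ∧ Function.Exact ε (d 0) ∧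
    ∀ i, Function.Exact (d i) (d (i+1))

/-- Projective dimension at most `n`. -/
def projDimLe (M : ModuleCat.{u} T) (n : ℕ) : Prop :=
  ResDimLe T (fun Q => Projective Q) M n

/-- Injective dimension at most `n`. -/
def injDimLe (M : ModuleCat.{u} T) (n : ℕ) : Prop :=
  CoresDimLe T (fun E => Injective E) M n

end Classes

/-! ### Tensor products over a (noncommutative) ring, flatness, character modules -/

section Tensor
variable (S : Type u) [Ring S]
variable (M : Type u) [AddCommGroup M] [Module Sᵐᵒᵖ M] (N : Type u) [AddCommGroup N] [Module S N]

/-- Defining relations of the balanced tensor product `M ⊗_S N` of a right `S`-module `M`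
and a left `S`-module `N`. -/
def trel : Set (TensorProduct ℤ M N) :=
  {x | ∃ (r : S) (m : M) (n : N), x = (MulOpposite.op r • m) ⊗ₜ[ℤ] n - m ⊗ₜ[ℤ] (r • n)}

/-- The balanced tensor product `M ⊗_S N` of a right `S`-module and a left `S`-module. -/
def Tens : Type u := TensorProduct ℤ M N ⧸ Submodule.span ℤ (trel S M N)

instance : AddCommGroup (Tens S M N) :=
  inferInstanceAs (AddCommGroup (TensorProduct ℤ M N ⧸ Submodule.span ℤ (trel S M N)))

variable {S M N}
variable {M' : Type u} [AddCommGroup M'] [Module Sᵐᵒᵖ M']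
variable {N' : Type u} [AddCommGroup N'] [Module S N']

/-- Functoriality of the balanced tensor product in the first variable. -/
def tmapL (f : M →ₗ[Sᵐᵒᵖ] M') (N : Type u) [AddCommGroup N] [Module S N] :
    Tens S M N →ₗ[ℤ] Tens S M' N :=
  Submodule.mapQ _ _ (TensorProduct.map f.toAddMonoidHom.toIntLinearMap LinearMap.id) (by
    rw [Submodule.span_le]
    rintro x ⟨r, m, n, rfl⟩
    refine Submodule.mem_comap.2 (Submodule.subset_span ⟨r, f m, n, ?_⟩)
    erw [map_sub, TensorProduct.map_tmul, TensorProduct.map_tmul]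
    simp [map_smul])

/-- Functoriality of the balanced tensor product in the second variable. -/
def tmapR (M : Type u) [AddCommGroup M] [Module Sᵐᵒᵖ M] (g : N →ₗ[S] N') :
    Tens S M N →ₗ[ℤ] Tens S M N' :=
  Submodule.mapQ _ _ (TensorProduct.map LinearMap.id g.toAddMonoidHom.toIntLinearMap) (by
    rw [Submodule.span_le]
    rintro x ⟨r, m, n, rfl⟩
    refine Submodule.mem_comap.2 (Submodule.subset_span ⟨r, m, g n, ?_⟩)
    erw [map_sub, TensorProduct.map_tmul, TensorProduct.map_tmul]
    simp [map_smul])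

end Tensor

section Char
variable (S : Type u) [Ring S] (M : Type u) [AddCommGroup M]

/-- The character group `M⁺ = Hom_ℤ(M, ℚ/ℤ)`. -/
def CharMod : Type u := M →+ AddCircle (1 : ℚ)

instance : FunLike (CharMod M) M (AddCircle (1 : ℚ)) where
  coe c := c.toFun
  coe_injective _ _ h := AddMonoidHom.ext (congrFun h)

instance : LinearMapClass (CharMod M) ℤ M (AddCircle (1 : ℚ)) where
  map_add f x y := AddMonoidHom.map_add (f : M →+ AddCircle (1 : ℚ)) x y
  map_smulₛₗ f n x := by
    rw [RingHom.id_apply]; exact AddMonoidHom.map_zsmul (f : M →+ AddCircle (1 : ℚ)) n x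

instance : AddCommGroup (CharMod M) := inferInstanceAs (AddCommGroup (M →+ _))

variable {M}

lemma CharMod.ext {f g : CharMod M} (h : ∀ m, f m = g m) : f = g := DFunLike.ext _ _ h

variable (M) [Module S M]

/-- The right `S`-action on the character module of a left `S`-module. -/
instance : SMul Sᵐᵒᵖ (CharMod M) :=
  ⟨fun s f => (f : M →+ AddCircle (1:ℚ)).comp (DistribMulAction.toAddMonoidHom M s.unop)⟩

variable {M}

lemma charSmul_apply (s : Sᵐᵒᵖ) (f : CharMod M) (m : M) :
    (s • f : CharMod M) m = f (s.unop • m) := rfl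

instance : Module Sᵐᵒᵖ (CharMod M) where
  one_smul f := CharMod.ext fun m => by rw [charSmul_apply]; simp
  mul_smul x y f := CharMod.ext fun m => by
    simp only [charSmul_apply, MulOpposite.unop_mul, mul_smul]
  smul_zero s := rfl
  smul_add s f g := rfl
  add_smul x y f := CharMod.ext fun m => by
    show f ((x + y).unop • m) = (x • f) m + (y • f) m
    rw [MulOpposite.unop_add, add_smul, map_add]; rfl
  zero_smul f := CharMod.ext fun m => by
    show f ((0 : Sᵐᵒᵖ).unop • m) = (0 : CharMod M) m
    simp only [MulOpposite.unop_zero, zero_smul]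
    show f 0 = (0 : M →+ AddCircle (1:ℚ)) m
    simp

/-- The character module `M⁺` of a left `S`-module, as a right `S`-module. -/
def charM (A : ModuleCat.{u} S) : ModuleCat.{u} Sᵐᵒᵖ := ModuleCat.of Sᵐᵒᵖ (CharMod A)

end Char

/-! ### F-total acyclicity, flat / Gorenstein flat / PGF modules (both sides) -/

section Sides
variable (S : Type u) [Ring S]

/-- Exactness of `C ⊗_S N` for a complex `C` of right `S`-modules and `N` a left
`S`-module. -/
def tensExactR (C : Cx Sᵐᵒᵖ) (N : ModuleCat.{u} S) : Prop :=
  ∀ n : ℤ, Function.Exact (tmapL (C.d (n+1) n).hom N) (tmapL (C.d n (n-1)).hom N)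

/-- Exactness of `M ⊗_S C` for a right `S`-module `M` and a complex `C` of left
`S`-modules. -/
def tensExactL (M : ModuleCat.{u} Sᵐᵒᵖ) (C : Cx S) : Prop :=
  ∀ n : ℤ, Function.Exact (tmapR M (C.d (n+1) n).hom) (tmapR M (C.d n (n-1)).hom)

/-- A flat right `S`-module: tensoring with it preserves injections of left modules. -/
def FlatRight (M : ModuleCat.{u} Sᵐᵒᵖ) : Prop :=
  ∀ (N N' : ModuleCat.{u} S) (g : N →ₗ[S] N'),
    Function.Injective g → Function.Injective (tmapR M g)

/-- A flat left `S`-module: tensoring with it preserves injections of right modules. -/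
def FlatLeft (N : ModuleCat.{u} S) : Prop :=
  ∀ (M M' : ModuleCat.{u} Sᵐᵒᵖ) (f : M →ₗ[Sᵐᵒᵖ] M'),
    Function.Injective f → Function.Injective (tmapL f N)

/-- An F-totally acyclic complex of right `S`-modules: exact, and `C ⊗ I` is exact for
every injective left `S`-module `I`. -/
def FTotAcyclicR (C : Cx Sᵐᵒᵖ) : Prop :=
  IsExactCx Sᵐᵒᵖ C ∧ ∀ I : ModuleCat.{u} S, Injective I → tensExactR S C I

/-- An F-totally acyclic complex of left `S`-modules: exact, and `I ⊗ C` is exact for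
every injective right `S`-module `I`. -/
def FTotAcyclicL (C : Cx S) : Prop :=
  IsExactCx S C ∧ ∀ I : ModuleCat.{u} Sᵐᵒᵖ, Injective I → tensExactL S I C

/-- A Gorenstein flat right `S`-module: a cycle of an F-totally acyclic complex of flat
right modules. -/
def GFlatR (M : ModuleCat.{u} Sᵐᵒᵖ) : Prop :=
  ∃ C : Cx Sᵐᵒᵖ, dwIn Sᵐᵒᵖ (FlatRight S) C ∧ FTotAcyclicR S C ∧ IsCycleOf Sᵐᵒᵖ C M

/-- A Gorenstein flat left `S`-module. -/
def GFlatL (M : ModuleCat.{u} S) : Prop :=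
  ∃ C : Cx S, dwIn S (FlatLeft S) C ∧ FTotAcyclicL S C ∧ IsCycleOf S C M

/-- A Gorenstein cotorsion right `S`-module: `Ext^1(G, -)` vanishes on it for every
Gorenstein flat `G`. -/
def GorCotR (Y : ModuleCat.{u} Sᵐᵒᵖ) : Prop :=
  ∀ G : ModuleCat.{u} Sᵐᵒᵖ, GFlatR S G → extVanish Sᵐᵒᵖ 1 G Y

/-- A Gorenstein cotorsion left `S`-module. -/
def GorCotL (Y : ModuleCat.{u} S) : Prop :=
  ∀ G : ModuleCat.{u} S, GFlatL S G → extVanish S 1 G Y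

/-- An exact complex of projective left modules which stays exact when tensored with any
injective right module. -/
def PGFCxL (C : Cx S) : Prop :=
  dwIn S (fun Q => Projective Q) C ∧ IsExactCx S C ∧
    ∀ I : ModuleCat.{u} Sᵐᵒᵖ, Injective I → tensExactL S I C

/-- A projectively coresolved Gorenstein flat left `S`-module. -/
def PGFL (M : ModuleCat.{u} S) : Prop := ∃ C : Cx S, PGFCxL S C ∧ IsCycleOf S C M

/-- An exact complex of projective right modules which stays exact when tensored with any
injective left module. -/
def PGFCxR (C : Cx Sᵐᵒᵖ) : Prop :=
  dwIn Sᵐᵒᵖ (fun Q => Projective Q) C ∧ IsExactCx Sᵐᵒᵖ C ∧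
    ∀ I : ModuleCat.{u} S, Injective I → tensExactR S C I

/-- A projectively coresolved Gorenstein flat right `S`-module. -/
def PGFR (M : ModuleCat.{u} Sᵐᵒᵖ) : Prop := ∃ C : Cx Sᵐᵒᵖ, PGFCxR S C ∧ IsCycleOf Sᵐᵒᵖ C M

/-- `S` is a coherent ring: finitely generated one-sided ideals (on either side) are
finitely presented. -/
def IsCoherentRing : Prop :=
  (∀ I : Submodule S S, I.FG → Module.FinitePresentation S I) ∧
  (∀ I : Submodule Sᵐᵒᵖ Sᵐᵒᵖ, I.FG → Module.FinitePresentation Sᵐᵒᵖ I)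

/-- `S` is left `n`-perfect: every flat left `S`-module has projective dimension ≤ `n`. -/
def LeftNPerfect (n : ℕ) : Prop :=
  ∀ M : ModuleCat.{u} S, FlatLeft S M → projDimLe S M n

/-- `S` is an Iwanaga–Gorenstein ring: two-sided noetherian with finite self-injective
dimension on both sides. -/
def IwanagaGorenstein : Prop :=
  IsNoetherianRing S ∧ IsNoetherianRing Sᵐᵒᵖ ∧
  (∃ n : ℕ, injDimLe S (ModuleCat.of S S) n) ∧
  (∃ n : ℕ, injDimLe Sᵐᵒᵖ (ModuleCat.of Sᵐᵒᵖ Sᵐᵒᵖ) n)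

end Sides

/-! ### The commutative case -/

section Comm
variable (R : Type u) [CommRing R]

/-- For a commutative ring: exactness of `I ⊗_R C`. -/
def tensExactC (I : ModuleCat.{u} R) (C : Cx R) : Prop :=
  ∀ n : ℤ, Function.Exact
    (LinearMap.lTensor (R := R) (M := I) (C.d (n+1) n).hom)
    (LinearMap.lTensor (R := R) (M := I) (C.d n (n-1)).hom)

/-- An F-totally acyclic complex over a commutative ring: exact, and `I ⊗_R C` is exact
for every injective module `I`. -/
def FTotAcyclicC (C : Cx R) : Prop :=
  IsExactCx R C ∧ ∀ I : ModuleCat.{u} R, Injective I → tensExactC R I C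

/-- A Gorenstein flat module over a commutative ring. -/
def GFlatC (M : ModuleCat.{u} R) : Prop :=
  ∃ C : Cx R, dwIn R (fun F => Module.Flat R F) C ∧ FTotAcyclicC R C ∧ IsCycleOf R C M

/-- A Gorenstein cotorsion module over a commutative ring. -/
def GorCotC (Y : ModuleCat.{u} R) : Prop :=
  ∀ G : ModuleCat.{u} R, GFlatC R G → extVanish R 1 G Y

/-- An exact complex of projectives over a commutative ring which stays exact when
tensored with any injective module. -/
def PGFCxC (C : Cx R) : Prop :=
  dwIn R (fun Q => Projective Q) C ∧ IsExactCx R C ∧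
    ∀ I : ModuleCat.{u} R, Injective I → tensExactC R I C

/-- A projectively coresolved Gorenstein flat module over a commutative ring. -/
def PGFC (M : ModuleCat.{u} R) : Prop := ∃ C : Cx R, PGFCxC R C ∧ IsCycleOf R C M

/-- The character module `M⁺` over a commutative ring, as an `R`-module. -/
def charC (M : ModuleCat.{u} R) : ModuleCat.{u} R := ModuleCat.of R (CharacterModule M)

/-- A coherent commutative ring: every finitely generated ideal is finitely presented. -/
def IsCoherentCommRing : Prop := ∀ I : Ideal R, I.FG → Module.FinitePresentation R I

/-- A commutative noetherian ring is Gorenstein if its self-injective dimension is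
finite. -/
def GorensteinCommRing : Prop :=
  IsNoetherianRing R ∧ ∃ n : ℕ, injDimLe R (ModuleCat.of R R) n

end Comm

end AcyclicGorenstein

end

open AcyclicGorenstein

/-!
Let `C` be an exact complex of flat right `R`-modules and `I` an injective left `R`-module.
The character complex `C⁺ = Hom_ℤ(C, ℚ/ℤ)` is an exact complex of injective left modules
(Lambek: characters of flat modules are injective), so by hypothesis its cycles are Ding
injective. A short exact sequence `0 → Z_{n+1} → C⁺_{n+1} → Z_n → 0` with Ding injective kernel
stays exact under `Hom(A, -)` for every FP-injective `A`, in particular for `A = I`.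
By adjunction `Hom_R(I, C⁺) ≅ (C ⊗_R I)⁺`, and since `ℚ/ℤ` is an injective cogenerator,
exactness of `(C ⊗_R I)⁺` gives exactness of `C ⊗_R I`.
-/

universe v

namespace AcyclicGorenstein

section LinearAlgebra

variable {R : Type*} [Ring R] {A B X Y Z D E : Type*}
  [AddCommGroup A] [Module R A] [AddCommGroup B] [Module R B] [AddCommGroup X] [Module R X]
  [AddCommGroup Y] [Module R Y] [AddCommGroup Z] [Module R Z] [AddCommGroup D] [Module R D]
  [AddCommGroup E] [Module R E]

lemma exists_comp_eq_of_surjective {p : Y →ₗ[R] Z} (hp : Function.Surjective p)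
    {g : Y →ₗ[R] E} (hg : LinearMap.ker p ≤ LinearMap.ker g) :
    ∃ ψ : Z →ₗ[R] E, ψ ∘ₗ p = g :=
  ⟨(LinearMap.ker p).liftQ g hg ∘ₗ (p.quotKerEquivOfSurjective hp).symm.toLinearMap,
    LinearMap.ext fun y => by simp [LinearMap.quotKerEquivOfSurjective_symm_apply]⟩

/-- The hypotheses say that `b ↦ (p b, h b)` identifies `B` with the pullback of `π` along `ψ`. -/
lemma exists_comp_eq_of_isPullback (p : B →ₗ[R] Z) (h : B →ₗ[R] D) (π : D →ₗ[R] E)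
    (ψ : Z →ₗ[R] E) (hp : Function.Surjective p) (hsq : ψ ∘ₗ p = π ∘ₗ h)
    (hinj : ∀ b, p b = 0 → h b = 0 → b = 0) (hker : ∀ d, π d = 0 → ∃ b, p b = 0 ∧ h b = d)
    (f : A →ₗ[R] Z) (g : A →ₗ[R] D) (hfg : ψ ∘ₗ f = π ∘ₗ g) :
    ∃ l : A →ₗ[R] B, p ∘ₗ l = f := by
  have hΦ : Function.Injective (p.prod h) := by
    rw [← LinearMap.ker_eq_bot, LinearMap.ker_prod, eq_bot_iff]
    exact fun b hb => hinj b hb.1 hb.2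
  have hrange : ∀ a, (f.prod g) a ∈ LinearMap.range (p.prod h) := by
    intro a
    obtain ⟨b, hb⟩ := hp (f a)
    have hπ : π (g a - h b) = 0 := by
      rw [map_sub, ← LinearMap.comp_apply π g, ← hfg, ← LinearMap.comp_apply π h, ← hsq]
      simp [hb]
    obtain ⟨b', hb'p, hb'h⟩ := hker _ hπ
    exact ⟨b + b', by simp [hb, hb'p, hb'h]⟩
  refine ⟨(LinearEquiv.ofInjective _ hΦ).symm.toLinearMap ∘ₗ (f.prod g).codRestrict _ hrange,
    LinearMap.ext fun a => ?_⟩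
  have hl : (p.prod h) ((LinearEquiv.ofInjective _ hΦ).symm ⟨_, hrange a⟩) = (f.prod g) a := by
    rw [← LinearEquiv.ofInjective_apply (h := hΦ), LinearEquiv.apply_symm_apply]
  exact congrArg Prod.fst hl

variable [Small.{v} R] {Q : Type v} [AddCommGroup Q] [Module R Q] [Module.Injective R Q]

lemma _root_.Function.Exact.exists_comp_eq_of_injective_module {f : X →ₗ[R] Y} {g : Y →ₗ[R] Z}
    (hfg : Function.Exact f g) {φ : Y →ₗ[R] Q} (hφ : φ ∘ₗ f = 0) :
    ∃ ψ : Z →ₗ[R] Q, ψ ∘ₗ g = φ := by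
  obtain ⟨ψ₀, hψ₀⟩ := exists_comp_eq_of_surjective g.surjective_rangeRestrict
    (g := φ) (by
      rw [LinearMap.ker_rangeRestrict, hfg.linearMap_ker_eq, LinearMap.range_le_ker_iff, hφ])
  obtain ⟨ψ, hψ⟩ := Module.Injective.extension_property R Q _ _ (LinearMap.range g).subtype
    (Submodule.injective_subtype _) ψ₀
  exact ⟨ψ, by rw [← hψ₀, ← hψ]; rfl⟩

end LinearAlgebra

section Complexes

variable {T : Type u} [Ring T]

lemma IsExactCx.exact {C : Cx T} (hC : IsExactCx T C) {i j k : ℤ} (hij : j + 1 = i)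
    (hjk : k + 1 = j) : Function.Exact (C.d i j) (C.d j k) := by
  subst hij hjk
  have := hC (k + 1)
  rwa [add_sub_cancel_right] at this

lemma homIntoExact.exists_lift {E : ModuleCat.{u} T} {C : Cx T} (hE : homIntoExact T E C)
    {i j k : ℤ} (hij : j + 1 = i) (hjk : k + 1 = j) (f : E →ₗ[T] C.X j)
    (hf : (C.d j k).hom ∘ₗ f = 0) : ∃ g : E →ₗ[T] C.X i, (C.d i j).hom ∘ₗ g = f := by
  subst hij hjk
  have := hE (k + 1) f
  rw [add_sub_cancel_right] at this
  exact this hf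

end Complexes

section ExtVanish

variable {T : Type u} [Ring T]

lemma extVanish_one_of_injective (F E : ModuleCat.{u} T) [Injective E] :
    extVanish T 1 F E := by
  have : Module.Injective T E := Module.injective_module_of_injective_object T E
  let P : ProjectiveResolution F := (HasProjectiveResolution.out (Z := F)).some
  have hP : Function.Exact (P.complex.d 2 1) (P.complex.d 1 0) :=
    (ShortComplex.ShortExact.moduleCat_exact_iff_function_exact _).1 (P.exact_succ 0)
  have hexact : (P.complex.linearYonedaObj ℤ E).ExactAt 1 := by
    rw [HomologicalComplex.exactAt_iff' _ 0 1 2 (by simp) (by simp),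
      ShortComplex.moduleCat_exact_iff]
    intro φ hφ
    obtain ⟨ψ, hψ⟩ := hP.exists_comp_eq_of_injective_module (φ := φ.hom)
      (congrArg ModuleCat.Hom.hom hφ)
    exact ⟨ModuleCat.ofHom ψ, ModuleCat.hom_ext hψ⟩
  have hzero := ((HomologicalComplex.exactAt_iff_isZero_homology _ _).1 hexact).of_iso
    (P.isoExt (R := ℤ) 1 E)
  exact ModuleCat.isZero_iff_subsingleton.1 hzero

lemma fpInj_of_injective {A : ModuleCat.{u} T} (hA : Injective A) : FPInj T A :=
  fun F _ => extVanish_one_of_injective F A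

end ExtVanish

section DingLift

variable {T : Type u} [Ring T]

/-- `Ext¹(A, K) = 0` in elementary form, for a cycle `K` of a complex `D` that is injective
at `K` and `Hom(A, -)`-exact. -/
lemma exists_lift_of_ker_equiv_cycle {D : Cx T} {m : ℤ} [Injective (D.X m)]
    {A : ModuleCat.{u} T} (hA : homIntoExact T A D) {B Z : Type u} [AddCommGroup B]
    [Module T B] [AddCommGroup Z] [Module T Z] (p : B →ₗ[T] Z) (hp : Function.Surjective p)
    (e : LinearMap.ker p ≃ₗ[T] LinearMap.ker (D.d m (m - 1)).hom) (f : A →ₗ[T] Z) :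
    ∃ l : A →ₗ[T] B, p ∘ₗ l = f := by
  have : Module.Injective T (D.X m) := Module.injective_module_of_injective_object T (D.X m)
  set π := (D.d m (m - 1)).hom
  obtain ⟨h, hh⟩ := Module.Injective.extension_property T (D.X m) _ _
    (LinearMap.ker p).subtype (Submodule.injective_subtype _)
    ((LinearMap.ker π).subtype ∘ₗ e.toLinearMap)
  have hh' (b : B) (hb : p b = 0) : h b = e ⟨b, hb⟩ := LinearMap.congr_fun hh ⟨b, hb⟩
  obtain ⟨ψ, hψ⟩ := exists_comp_eq_of_surjective hp (g := π ∘ₗ h) fun b hb => by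
    simp [hh' b hb]
  have hψf : (D.d (m - 1) (m - 1 - 1)).hom ∘ₗ (ψ ∘ₗ f) = 0 := by
    ext a
    obtain ⟨b, hb⟩ := hp (f a)
    rw [LinearMap.comp_apply, LinearMap.comp_apply, ← hb, ← LinearMap.comp_apply ψ p, hψ]
    exact LinearMap.congr_fun (congrArg ModuleCat.Hom.hom (D.d_comp_d m (m - 1) (m - 1 - 1))) (h b)
  obtain ⟨g, hg⟩ := hA.exists_lift (sub_add_cancel m 1) (sub_add_cancel (m - 1) 1) _ hψf
  refine exists_comp_eq_of_isPullback p h π ψ hp hψ (fun b hb hhb => ?_)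
    (fun d hd => ?_) f g hg.symm
  · have : e ⟨b, hb⟩ = 0 := Subtype.ext ((hh' b hb).symm.trans hhb)
    exact congrArg Subtype.val (e.map_eq_zero_iff.1 this)
  · refine ⟨e.symm ⟨d, hd⟩, (e.symm ⟨d, hd⟩).2, ?_⟩
    rw [hh' _ (e.symm ⟨d, hd⟩).2]
    simp

lemma homIntoExact_of_cyclesIn_dingInj {W : Cx T} (hW : IsExactCx T W)
    (hcyc : cyclesIn T (DingInj T) W) {A : ModuleCat.{u} T} (hA : FPInj T A) :
    homIntoExact T A W := by
  intro n f hf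
  obtain ⟨D, ⟨hDinj, -, hDhom⟩, m, ⟨e⟩⟩ := hcyc (n + 1)
  have : Injective (D.X m) := hDinj m
  let p := (W.d (n + 1) n).hom.codRestrict (LinearMap.ker (W.d n (n - 1)).hom) fun b =>
    LinearMap.congr_fun (congrArg ModuleCat.Hom.hom (W.d_comp_d (n + 1) n (n - 1))) b
  have hp : Function.Surjective p := fun ⟨z, hz⟩ => by
    obtain ⟨b, hb⟩ := (hW n z).1 hz
    exact ⟨b, Subtype.ext hb⟩
  have hker : LinearMap.ker p = LinearMap.ker (W.d (n + 1) (n + 1 - 1)).hom := by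
    rw [add_sub_cancel_right]
    exact LinearMap.ker_codRestrict _ _ _
  obtain ⟨l, hl⟩ := exists_lift_of_ker_equiv_cycle (hDhom A hA) p hp
    ((LinearEquiv.ofEq _ _ hker).trans e) (f.codRestrict _ fun a => LinearMap.congr_fun hf a)
  exact ⟨l, LinearMap.ext fun a => congrArg Subtype.val (LinearMap.congr_fun hl a)⟩

end DingLift

lemma exact_of_characters {A B C : Type*} [AddCommGroup A] [AddCommGroup B] [AddCommGroup C]
    (f : A →ₗ[ℤ] B) (g : B →ₗ[ℤ] C) (hgf : g ∘ₗ f = 0)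
    (hlift : ∀ χ : CharacterModule B, (∀ a, χ (f a) = 0) →
      ∃ ξ : CharacterModule C, ∀ b, ξ (g b) = χ b) :
    Function.Exact f g := by
  refine fun y => ⟨fun hy => ?_, fun ⟨a, ha⟩ => ha ▸ LinearMap.congr_fun hgf a⟩
  by_contra hne
  have hmk : (LinearMap.range f).mkQ y ≠ 0 := by
    simpa [Submodule.Quotient.mk_eq_zero] using hne
  obtain ⟨c, hc⟩ := CharacterModule.exists_character_apply_ne_zero_of_ne_zero hmk
  obtain ⟨ξ, hξ⟩ := hlift (CharacterModule.dual (LinearMap.range f).mkQ c) fun a => by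
    show c (Submodule.Quotient.mk (f a)) = 0
    rw [(Submodule.Quotient.mk_eq_zero _).2 (LinearMap.mem_range_self f a), map_zero]
  have hξy := hξ y
  rw [hy, map_zero] at hξy
  exact hc hξy.symm

section Character

variable {R : Type u} [Ring R] {M N P : Type u} [AddCommGroup M] [Module Rᵐᵒᵖ M]
  [AddCommGroup N] [Module Rᵐᵒᵖ N] [AddCommGroup P] [Module Rᵐᵒᵖ P]

/-- The left `R`-module structure on the character module of a right `R`-module, obtained from
the right `Rᵐᵒᵖ`-module structure through `R ≃+* Rᵐᵒᵖᵐᵒᵖ`. -/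
instance : Module R (CharMod M) := Module.compHom (CharMod M) (RingEquiv.opOp R).toRingHom

lemma CharMod.smul_apply (r : R) (χ : CharMod M) (m : M) :
    (r • χ) m = χ (MulOpposite.op r • m) := rfl

def CharMod.dual (f : M →ₗ[Rᵐᵒᵖ] N) : CharMod N →ₗ[R] CharMod M where
  toFun χ := (χ : N →+ AddCircle (1 : ℚ)).comp f.toAddMonoidHom
  map_add' _ _ := rfl
  map_smul' r χ := CharMod.ext fun m => congrArg χ (map_smul f (MulOpposite.op r) m).symm

lemma CharMod.dual_apply (f : M →ₗ[Rᵐᵒᵖ] N) (χ : CharMod N) (m : M) :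
    CharMod.dual f χ m = χ (f m) := rfl

lemma CharMod.dual_comp (f : M →ₗ[Rᵐᵒᵖ] N) (g : N →ₗ[Rᵐᵒᵖ] P) :
    CharMod.dual (g ∘ₗ f) = CharMod.dual f ∘ₗ CharMod.dual (R := R) g := rfl

lemma CharMod.dual_zero : CharMod.dual (0 : M →ₗ[Rᵐᵒᵖ] N) = 0 :=
  LinearMap.ext fun χ => CharMod.ext fun _ => map_zero χ

lemma CharMod.dual_exact {f : M →ₗ[Rᵐᵒᵖ] N} {g : N →ₗ[Rᵐᵒᵖ] P} (hfg : Function.Exact f g) :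
    Function.Exact (CharMod.dual (R := R) g) (CharMod.dual f) := by
  have : Module.Injective ℤ (AddCircle (1 : ℚ)) := (Module.Baer.of_divisible _).injective
  refine fun χ => ⟨fun hχ => ?_, fun ⟨ξ, hξ⟩ => hξ ▸ CharMod.ext fun m => ?_⟩
  · obtain ⟨ψ, hψ⟩ := Function.Exact.exists_comp_eq_of_injective_module
      (f := f.toAddMonoidHom.toIntLinearMap) (g := g.toAddMonoidHom.toIntLinearMap) hfg
      (φ := (χ : N →+ AddCircle (1 : ℚ)).toIntLinearMap)
      (LinearMap.ext fun m => DFunLike.congr_fun hχ m)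
    exact ⟨ψ.toAddMonoidHom, CharMod.ext fun n => LinearMap.congr_fun hψ n⟩
  · simp only [CharMod.dual_apply, hfg.apply_apply_eq_zero, map_zero]
    rfl

end Character

namespace Tens

variable {R : Type u} [Ring R] {M M' : Type u} [AddCommGroup M] [Module Rᵐᵒᵖ M]
  [AddCommGroup M'] [Module Rᵐᵒᵖ M'] {N : Type u} [AddCommGroup N] [Module R N]

variable (R M N) in
def mk : M →ₗ[ℤ] N →ₗ[ℤ] Tens R M N :=
  (TensorProduct.mk ℤ M N).compr₂ (Submodule.mkQ _)

lemma mk_op_smul (r : R) (m : M) (n : N) :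
    mk R M N (MulOpposite.op r • m) n = mk R M N m (r • n) :=
  (Submodule.Quotient.eq _).2 (Submodule.subset_span ⟨r, m, n, rfl⟩)

lemma hom_ext {Q : Type*} [AddCommGroup Q] {φ ψ : Tens R M N →ₗ[ℤ] Q}
    (h : ∀ m n, φ (mk R M N m n) = ψ (mk R M N m n)) : φ = ψ :=
  Submodule.linearMap_qext _ (TensorProduct.ext' h)

lemma tmapL_mk (f : M →ₗ[Rᵐᵒᵖ] M') (m : M) (n : N) :
    tmapL f N (mk R M N m n) = mk R M' N (f m) n := rfl

/-- With `curryChar`, the adjunction `Hom_R(N, M⁺) ≅ (M ⊗_R N)⁺`. -/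
def uncurryChar (φ : N →ₗ[R] CharMod M) : CharacterModule (Tens R M N) :=
  (Submodule.liftQ _ (TensorProduct.lift (LinearMap.mk₂ ℤ (fun m n => φ n m)
    (fun _ _ n => map_add (φ n) _ _) (fun c m n => map_zsmul (φ n) c m)
    (fun m n n' => by rw [map_add]; rfl) (fun c m n => by rw [map_zsmul]; rfl))) (by
      refine Submodule.span_le.2 ?_
      rintro _ ⟨r, m, n, rfl⟩
      show TensorProduct.lift _ ((MulOpposite.op r • m) ⊗ₜ[ℤ] n - m ⊗ₜ[ℤ] (r • n)) = 0
      rw [map_sub, TensorProduct.lift.tmul, TensorProduct.lift.tmul, LinearMap.mk₂_apply,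
        LinearMap.mk₂_apply, map_smul φ, CharMod.smul_apply, sub_self])).toAddMonoidHom

def curryChar (χ : CharacterModule (Tens R M N)) : N →ₗ[R] CharMod M where
  toFun n := (χ : Tens R M N →+ AddCircle (1 : ℚ)).comp ((mk R M N).flip n).toAddMonoidHom
  map_add' n n' := CharMod.ext fun m => by
    show χ (mk R M N m (n + n')) = χ (mk R M N m n) + χ (mk R M N m n')
    rw [map_add, map_add]
  map_smul' r n := CharMod.ext fun m => by
    show χ (mk R M N m (r • n)) = χ (mk R M N (MulOpposite.op r • m) n)
    rw [mk_op_smul]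

end Tens

section CharacterComplex

variable {R : Type u} [Ring R]

lemma injective_charMod_of_flatRight {F : ModuleCat.{u} Rᵐᵒᵖ} (hF : FlatRight R F) :
    Injective (ModuleCat.of R (CharMod F)) := by
  refine Module.injective_object_of_injective_module (inj := Module.Baer.injective ?_)
  intro I φ
  have hI : Function.Injective (tmapR (F : Type u) I.subtype) :=
    hF (ModuleCat.of R I) (ModuleCat.of R R) I.subtype (Submodule.injective_subtype I)
  obtain ⟨ξ, hξ⟩ := CharacterModule.dual_surjective_of_injective
    (tmapR (F : Type u) I.subtype) hI (Tens.uncurryChar φ)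
  refine ⟨Tens.curryChar ξ, fun x hx => CharMod.ext fun f => ?_⟩
  exact DFunLike.congr_fun hξ (Tens.mk R F I f ⟨x, hx⟩)

/-- Characters detect exactness, and `(M₁ ⊗ N → M₂ ⊗ N → M₃ ⊗ N)⁺` is
`Hom_R(N, M₃⁺) → Hom_R(N, M₂⁺) → Hom_R(N, M₁⁺)`. -/
lemma exact_tmapL_of_lift {M₁ M₂ M₃ : Type u} [AddCommGroup M₁] [Module Rᵐᵒᵖ M₁]
    [AddCommGroup M₂] [Module Rᵐᵒᵖ M₂] [AddCommGroup M₃] [Module Rᵐᵒᵖ M₃]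
    {f : M₁ →ₗ[Rᵐᵒᵖ] M₂} {g : M₂ →ₗ[Rᵐᵒᵖ] M₃} (hgf : g ∘ₗ f = 0) {N : Type u}
    [AddCommGroup N] [Module R N]
    (hlift : ∀ φ : N →ₗ[R] CharMod M₂, CharMod.dual f ∘ₗ φ = 0 →
      ∃ ψ : N →ₗ[R] CharMod M₃, CharMod.dual g ∘ₗ ψ = φ) :
    Function.Exact (tmapL f N) (tmapL g N) := by
  refine exact_of_characters _ _ (Tens.hom_ext fun m n => ?_) fun χ hχ => ?_
  · simp [Tens.tmapL_mk, show g (f m) = 0 from LinearMap.congr_fun hgf m]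
  · obtain ⟨ψ, hψ⟩ := hlift (Tens.curryChar χ)
      (LinearMap.ext fun n => CharMod.ext fun m => hχ (Tens.mk R M₁ N m n))
    refine ⟨Tens.uncurryChar ψ, fun x => ?_⟩
    have hext : (Tens.uncurryChar ψ).toIntLinearMap ∘ₗ tmapL g N = χ.toIntLinearMap :=
      Tens.hom_ext fun m n => DFunLike.congr_fun (LinearMap.congr_fun hψ n) m
    exact LinearMap.congr_fun hext x

variable (R) in
/-- The character complex `C⁺ = Hom_ℤ(C, ℚ/ℤ)` of a complex of right modules, reindexed by
`k ↦ -k` so that it is again a chain complex. -/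
def charCx (C : Cx Rᵐᵒᵖ) : Cx R where
  X k := ModuleCat.of R (CharMod (C.X (-k)))
  d i j := ModuleCat.ofHom (CharMod.dual (C.d (-j) (-i)).hom)
  shape i j hij := by
    rw [C.shape (-j) (-i) (fun h => hij (by simp at h ⊢; omega)), ModuleCat.hom_zero,
      CharMod.dual_zero]
    rfl
  d_comp_d' i j k _ _ := by
    rw [← ModuleCat.ofHom_comp, ← CharMod.dual_comp, ← ModuleCat.hom_comp, C.d_comp_d,
      ModuleCat.hom_zero, CharMod.dual_zero]
    rfl

lemma isExactCx_charCx {C : Cx Rᵐᵒᵖ} (hC : IsExactCx Rᵐᵒᵖ C) : IsExactCx R (charCx R C) :=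
  fun k => CharMod.dual_exact (hC.exact (i := -(k - 1)) (by ring) (by ring))

lemma dwIn_injective_charCx {C : Cx Rᵐᵒᵖ} (hC : dwIn Rᵐᵒᵖ (FlatRight R) C) :
    dwIn R (fun M => Injective M) (charCx R C) :=
  fun k => injective_charMod_of_flatRight (hC (-k))

lemma tensExactR_of_homIntoExact_charCx {C : Cx Rᵐᵒᵖ} {N : ModuleCat.{u} R}
    (hN : homIntoExact R N (charCx R C)) : tensExactR R C N := by
  have key (i j k : ℤ) (hij : j + 1 = i) (hjk : k + 1 = j) :
      Function.Exact (tmapL (C.d (-k) (-j)).hom N) (tmapL (C.d (-j) (-i)).hom N) :=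
    exact_tmapL_of_lift (congrArg ModuleCat.Hom.hom (C.d_comp_d _ _ _))
      fun φ hφ => hN.exists_lift hij hjk φ hφ
  intro n
  have := key (-(n - 1)) (-n) (-(n + 1)) (by ring) (by ring)
  rwa [neg_neg, neg_neg, neg_neg] at this

end CharacterComplex

end AcyclicGorenstein

theorem statement_16_general (R : Type u) [Ring R]
    (h : ∀ C : Cx R, IsExactCx R C → dwIn R (fun M => Injective M) C →
      cyclesIn R (DingInj R) C) :
    ∀ C : Cx Rᵐᵒᵖ, IsExactCx Rᵐᵒᵖ C → dwIn Rᵐᵒᵖ (FlatRight R) C → FTotAcyclicR R C := by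
  intro C hC hflat
  have hW := isExactCx_charCx hC
  have hcyc := h (charCx R C) hW (dwIn_injective_charCx hflat)
  exact ⟨hC, fun I hI => tensExactR_of_homIntoExact_charCx
    (homIntoExact_of_cyclesIn_dingInj hW hcyc (fpInj_of_injective hI))⟩

/-- over a coherent ring, if every exact complex of injective left
modules has all cycles Ding injective, then every exact complex of flat right modules
is F-totally acyclic. -/
theorem statement_16 (R : Type u) [Ring R] (hcoh : IsCoherentRing R)
    (h : ∀ C : Cx R, IsExactCx R C → dwIn R (fun M => Injective M) C →
      cyclesIn R (DingInj R) C) :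
    ∀ C : Cx Rᵐᵒᵖ, IsExactCx Rᵐᵒᵖ C → dwIn Rᵐᵒᵖ (FlatRight R) C → FTotAcyclicR R C :=
  statement_16_general R h
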